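/- arXiv:2509.18915 — 2 statements merged into one kernel-verified Lean document; each statement's English description precedes it below -/
import Mathlib

section
/- Let R be the ring of (n+1)×(n+1) matrices over F_q whose last row is zero. A left ideal L of R is maximal if and only if |L| = q^{n²}. -/
/-- Left ideal of a (not necessarily unital) ring, as a set. -/
def IsLeftIdeal {R : Type*} [NonUnitalRing R] (L : Set R) : Prop :=
  0 ∈ L ∧ (∀ a ∈ L, ∀ b ∈ L, a + b ∈ L) ∧ (∀ a ∈ L, -a ∈ L) ∧
    ∀ (r : R), ∀ a ∈ L, r * a ∈ L

/-- Maximal left ideal: a proper left ideal not properly contained in any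
proper left ideal. -/
def IsMaximalLeftIdeal {R : Type*} [NonUnitalRing R] (M : Set R) : Prop :=
  IsLeftIdeal M ∧ M ≠ Set.univ ∧
    ∀ L : Set R, IsLeftIdeal L → M ⊂ L → L = Set.univ

/-- The ring of `(n+1) × (n+1)` matrices over `F` whose last row is zero. -/
def lastRowZero (n : ℕ) (F : Type*) [Field F] :
    NonUnitalSubring (Matrix (Fin (n + 1)) (Fin (n + 1)) F) where
  carrier := {M | ∀ j, M (Fin.last n) j = 0}
  zero_mem' := by intro j; simp
  add_mem' := by intro a b ha hb j; simp [Matrix.add_apply, ha j, hb j]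
  neg_mem' := by intro a ha j; simp [Matrix.neg_apply, ha j]
  mul_mem' := by
    intro a b ha hb j
    simp only [Set.mem_setOf_eq] at ha ⊢
    simp [Matrix.mul_apply, ha]

/-!
Multiplying an element of `L` on the left by a matrix unit moves any of its rows to any of the
first `n` row positions and kills the others. Hence a left ideal `L` consists exactly of the
matrices whose first `n` rows lie in the subspace `W ⊆ F^(n+1)` spanned by the rows of its
elements, and for `n ≥ 1` this identifies left ideals with subspaces as ordered sets. So `L` is
maximal iff `W` is a hyperplane, i.e. `dim W = n`, while `|L| = |W|^n = q^(n · dim W)`.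
-/

open Matrix Module

theorem Submodule.isCoatom_iff_finrank_add_one_eq {K V : Type*} [DivisionRing K] [AddCommGroup V]
    [Module K V] [FiniteDimensional K V] {W : Submodule K V} :
    IsCoatom W ↔ finrank K W + 1 = finrank K V := by
  rw [← isSimpleModule_iff_isCoatom, isSimpleModule_iff_finrank_eq_one,
    ← W.finrank_quotient_add_finrank]
  omega

def IsLeftIdeal.toAddSubgroup {R : Type*} [NonUnitalRing R] {L : Set R} (hL : IsLeftIdeal L) :
    AddSubgroup R where
  carrier := L
  zero_mem' := hL.1
  add_mem' ha hb := hL.2.1 _ ha _ hb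
  neg_mem' := hL.2.2.1 _

theorem IsLeftIdeal.mul_mem {R : Type*} [NonUnitalRing R] {L : Set R} (hL : IsLeftIdeal L)
    (r : R) {a : R} (ha : a ∈ L) : r * a ∈ L :=
  hL.2.2.2 r a ha

namespace lastRowZero

variable {F : Type*} [Field F] {n : ℕ}

def rowsEquiv : lastRowZero n F ≃+ (Fin n → Fin (n + 1) → F) where
  toFun a := Fin.init (a : Matrix (Fin (n + 1)) (Fin (n + 1)) F)
  invFun f := ⟨Matrix.of (Fin.snoc f 0), fun j => by simp⟩
  left_inv a := by
    have hlast : (a : Matrix (Fin (n + 1)) (Fin (n + 1)) F) (Fin.last n) = 0 := funext a.2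
    ext1
    conv_rhs => rw [← Fin.snoc_init_self (a : Matrix (Fin (n + 1)) (Fin (n + 1)) F), hlast]
    rfl
  right_inv f := Fin.init_snoc _ _
  map_add' _ _ := rfl

theorem rowsEquiv_mul (a b : lastRowZero n F) (i : Fin n) :
    rowsEquiv (a * b) i = ∑ k : Fin n, rowsEquiv a i k.castSucc • rowsEquiv b k := by
  have hlast : (b : Matrix (Fin (n + 1)) (Fin (n + 1)) F) (Fin.last n) = 0 := funext b.2
  change ((a : Matrix (Fin (n + 1)) (Fin (n + 1)) F) * b) i.castSucc = _
  rw [mul_apply_eq_vecMul, vecMul_eq_sum, Fin.sum_univ_castSucc, hlast, smul_zero, add_zero]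
  rfl

def singleRow (i : Fin n) (v : Fin (n + 1) → F) : lastRowZero n F :=
  rowsEquiv.symm (Pi.single i v)

@[simp]
theorem rowsEquiv_singleRow (i : Fin n) (v : Fin (n + 1) → F) :
    rowsEquiv (singleRow i v) = Pi.single i v :=
  rowsEquiv.apply_symm_apply _

theorem singleRow_add (i : Fin n) (v w : Fin (n + 1) → F) :
    singleRow i (v + w) = singleRow i v + singleRow i w := by
  rw [singleRow, Pi.single_add, map_add]; rfl

theorem singleRow_single_mul (i j : Fin n) (c : F) (b : lastRowZero n F) :
    singleRow i (Pi.single j.castSucc c) * b = singleRow i (c • rowsEquiv b j) := by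
  apply rowsEquiv.injective
  funext r
  rw [rowsEquiv_mul, rowsEquiv_singleRow, rowsEquiv_singleRow]
  rcases eq_or_ne r i with rfl | h
  · simp [Pi.single_apply, ite_smul]
  · simp [h]

theorem sum_singleRow (a : lastRowZero n F) : ∑ i, singleRow i (rowsEquiv a i) = a := by
  apply rowsEquiv.injective
  rw [map_sum]
  simp only [rowsEquiv_singleRow]
  exact Finset.univ_sum_single _

def rowIdeal (W : Submodule F (Fin (n + 1) → F)) : Set (lastRowZero n F) :=
  {a | ∀ i, rowsEquiv a i ∈ W}

def rowSpace (L : Set (lastRowZero n F)) : Submodule F (Fin (n + 1) → F) :=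
  Submodule.span F {v | ∃ a ∈ L, ∃ i, rowsEquiv a i = v}

theorem rowSpace_mono {L L' : Set (lastRowZero n F)} (h : L ⊆ L') : rowSpace L ≤ rowSpace L' :=
  Submodule.span_mono fun _ ⟨a, ha, i, hi⟩ => ⟨a, h ha, i, hi⟩

theorem isLeftIdeal_rowIdeal (W : Submodule F (Fin (n + 1) → F)) : IsLeftIdeal (rowIdeal W) := by
  refine ⟨fun i => W.zero_mem, fun a ha b hb i => ?_, fun a ha i => ?_, fun r a ha i => ?_⟩
  · rw [map_add]; exact W.add_mem (ha i) (hb i)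
  · rw [map_neg]; exact W.neg_mem (ha i)
  · rw [rowsEquiv_mul]; exact W.sum_mem fun k _ => W.smul_mem _ (ha k)

theorem rowIdeal_top : rowIdeal (⊤ : Submodule F (Fin (n + 1) → F)) = Set.univ :=
  Set.eq_univ_of_forall fun _ _ => Submodule.mem_top

theorem singleRow_mem_of_mem_rowSpace {L : Set (lastRowZero n F)} (hL : IsLeftIdeal L)
    {v : Fin (n + 1) → F} (hv : v ∈ rowSpace L) (i : Fin n) : singleRow i v ∈ L := by
  induction hv using Submodule.span_induction with
  | mem v hv =>
    obtain ⟨b, hb, j, rfl⟩ := hv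
    rw [← one_smul F (rowsEquiv b j), ← singleRow_single_mul]
    exact hL.mul_mem _ hb
  | zero => simpa [singleRow] using hL.1
  | add v w _ _ hv hw => rw [singleRow_add]; exact hL.2.1 _ hv _ hw
  | smul c v _ hv =>
    have : singleRow i (c • v) = singleRow i (Pi.single i.castSucc c) * singleRow i v := by
      rw [singleRow_single_mul, rowsEquiv_singleRow, Pi.single_eq_same]
    rw [this]
    exact hL.mul_mem _ hv

theorem rowIdeal_rowSpace {L : Set (lastRowZero n F)} (hL : IsLeftIdeal L) :
    rowIdeal (rowSpace L) = L := by
  ext a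
  refine ⟨fun ha => ?_, fun ha i => Submodule.subset_span ⟨a, ha, i, rfl⟩⟩
  rw [← sum_singleRow a]
  change _ ∈ hL.toAddSubgroup
  exact sum_mem fun i _ => singleRow_mem_of_mem_rowSpace hL (ha i) i

theorem rowSpace_rowIdeal (hn : 0 < n) (W : Submodule F (Fin (n + 1) → F)) :
    rowSpace (rowIdeal W) = W := by
  refine le_antisymm (Submodule.span_le.2 ?_) fun v hv => Submodule.subset_span ?_
  · rintro _ ⟨a, ha, i, rfl⟩
    exact ha i
  · refine ⟨singleRow ⟨0, hn⟩ v, fun i => ?_, ⟨0, hn⟩, by simp⟩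
    rcases eq_or_ne i ⟨0, hn⟩ with rfl | h
    · simpa using hv
    · simp [h]

def rowIdealEmbedding (hn : 0 < n) : Submodule F (Fin (n + 1) → F) ↪o Set (lastRowZero n F) :=
  OrderEmbedding.ofMapLEIff rowIdeal fun W W' =>
    ⟨fun h => by simpa only [rowSpace_rowIdeal hn] using rowSpace_mono h,
      fun h _ ha i => h (ha i)⟩

theorem isMaximalLeftIdeal_rowIdeal_iff (hn : 0 < n) {W : Submodule F (Fin (n + 1) → F)} :
    IsMaximalLeftIdeal (rowIdeal W) ↔ IsCoatom W := by
  have eq_univ_iff (W' : Submodule F (Fin (n + 1) → F)) : rowIdeal W' = Set.univ ↔ W' = ⊤ := by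
    rw [← rowIdeal_top]; exact (rowIdealEmbedding hn).eq_iff_eq
  constructor
  · rintro ⟨-, hne, hmax⟩
    exact ⟨fun h => hne ((eq_univ_iff W).2 h), fun W' hW' => (eq_univ_iff W').1
      (hmax _ (isLeftIdeal_rowIdeal W') ((rowIdealEmbedding hn).lt_iff_lt.2 hW'))⟩
  · rintro ⟨hne, hmax⟩
    refine ⟨isLeftIdeal_rowIdeal W, fun h => hne ((eq_univ_iff W).1 h), fun L hL hlt => ?_⟩
    rw [← rowIdeal_rowSpace hL] at hlt ⊢
    exact (eq_univ_iff _).2 (hmax _ ((rowIdealEmbedding hn).lt_iff_lt.1 hlt))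

theorem ncard_rowIdeal [Finite F] (W : Submodule F (Fin (n + 1) → F)) :
    (rowIdeal W).ncard = Nat.card F ^ (n * finrank F W) := by
  have e : rowIdeal W ≃ (Fin n → W) :=
    (rowsEquiv.toEquiv.subtypeEquiv fun _ => Iff.rfl).trans Equiv.subtypePiEquivPi
  rw [← Nat.card_coe_set_eq, Nat.card_congr e, Nat.card_fun, Nat.card_fin,
    Module.natCard_eq_pow_finrank (K := F), ← pow_mul, mul_comm]

end lastRowZero

open lastRowZero in
/-- A left ideal of the ring of `(n+1)×(n+1)` matrices over `F_q` with last row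
zero is maximal if and only if it has cardinality `q^(n²)`. -/
theorem maximal_iff_card {F : Type*} [Field F] [Fintype F] {n : ℕ} (hn : 1 ≤ n)
    (L : Set ↥(lastRowZero n F)) (hL : IsLeftIdeal L) :
    IsMaximalLeftIdeal L ↔ L.ncard = Fintype.card F ^ (n ^ 2) := by
  rw [← rowIdeal_rowSpace hL, isMaximalLeftIdeal_rowIdeal_iff hn,
    Submodule.isCoatom_iff_finrank_add_one_eq, ncard_rowIdeal, Module.finrank_fin_fun,
    Nat.card_eq_fintype_card, Nat.pow_right_injective Fintype.one_lt_card |>.eq_iff, sq,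
    Nat.mul_left_cancel_iff hn]
  omega
end

section
/- Let R = {(A|v) : A ∈ M_n(F_q), v ∈ F_q^n} with multiplication (A|v)(B|w) = (AB|Aw). Then J = {(0|v) : v ∈ F_q^n} is the Jacobson radical of R and is the only proper nonzero two-sided ideal of R; in particular R/J ≅ M_n(F_q). -/
/-!
Write `x = (A | v)`. The map `x ↦ A` is a surjective ring homomorphism onto `Mₙ(F)` whose kernel
`J` satisfies `J R = 0`. Hence every element of `J` squares to zero and is quasi-regular; conversely,
if `A ≠ 0` then some `E A` is a nonzero idempotent, and a nonzero idempotent is never left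
quasi-regular. An ideal not contained in `J` maps onto a nonzero ideal of the simple ring `Mₙ(F)`,
so it contains some `(1 | w)`, which is a left identity of `R`. An ideal containing `(0 | v)` with
`v ≠ 0` contains `(B | 0)(0 | v) = (0 | B v)` for every `B`, hence all of `J`.
-/

/-- Two-sided ideal of a (not necessarily unital) ring, as a set. -/
def IsTwoSidedIdealSet {R : Type*} [NonUnitalRing R] (I : Set R) : Prop :=
  0 ∈ I ∧ (∀ a ∈ I, ∀ b ∈ I, a + b ∈ I) ∧ (∀ a ∈ I, -a ∈ I) ∧
    (∀ (r : R), ∀ a ∈ I, r * a ∈ I) ∧ ∀ (r : R), ∀ a ∈ I, a * r ∈ I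

/-- The circle operation `a ∘ b = a + b - ab`. -/
def circOp {R : Type*} [NonUnitalRing R] (a b : R) : R := a + b - a * b

/-- `a` is left quasi-regular if it has a left inverse for `∘`. -/
def IsLeftQuasiRegular {R : Type*} [NonUnitalRing R] (a : R) : Prop :=
  ∃ b : R, circOp b a = 0

/-- The Jacobson radical of a not necessarily unital ring. -/
def jacobsonSet (R : Type*) [NonUnitalRing R] : Set R :=
  {a : R | ∀ r : R, IsLeftQuasiRegular (r * a)}

/-- The top-left `n × n` block of an element `(A | v)` of the ring. -/
def topLeft {n : ℕ} {F : Type*} [Field F] (x : ↥(lastRowZero n F)) :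
    Matrix (Fin n) (Fin n) F :=
  Matrix.of fun i j =>
    (x : Matrix (Fin (n + 1)) (Fin (n + 1)) F) i.castSucc j.castSucc

section QuasiRegular

variable {R S : Type*} [NonUnitalRing R] [NonUnitalRing S]

theorem isLeftQuasiRegular_of_mul_self_eq_zero {x : R} (hx : x * x = 0) :
    IsLeftQuasiRegular x :=
  ⟨-x, by simp [circOp, hx]⟩

theorem IsLeftQuasiRegular.map (f : R →ₙ+* S) {x : R} (hx : IsLeftQuasiRegular x) :
    IsLeftQuasiRegular (f x) := by
  obtain ⟨b, hb⟩ := hx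
  exact ⟨f b, by simpa [circOp] using congrArg f hb⟩

theorem IsIdempotentElem.eq_zero_of_isLeftQuasiRegular {e : R} (he : IsIdempotentElem e)
    (hq : IsLeftQuasiRegular e) : e = 0 := by
  obtain ⟨b, hb⟩ := hq
  have := congrArg (· * e) hb
  simpa [circOp, sub_mul, add_mul, mul_assoc, he.eq] using this

end QuasiRegular

section TwoSidedIdealSet

theorem IsTwoSidedIdealSet.image {R S : Type*} [NonUnitalRing R] [NonUnitalRing S]
    {I : Set R} (hI : IsTwoSidedIdealSet I) {f : R →ₙ+* S} (hf : Function.Surjective f) :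
    IsTwoSidedIdealSet (f '' I) := by
  obtain ⟨hzero, hadd, hneg, hleft, hright⟩ := hI
  refine ⟨⟨0, hzero, map_zero f⟩, ?_, ?_, ?_, ?_⟩
  · rintro _ ⟨a, ha, rfl⟩ _ ⟨b, hb, rfl⟩
    exact ⟨a + b, hadd a ha b hb, map_add f a b⟩
  · rintro _ ⟨a, ha, rfl⟩
    exact ⟨-a, hneg a ha, map_neg f a⟩
  · rintro s _ ⟨a, ha, rfl⟩
    obtain ⟨r, rfl⟩ := hf s
    exact ⟨r * a, hleft r a ha, map_mul f r a⟩
  · rintro s _ ⟨a, ha, rfl⟩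
    obtain ⟨r, rfl⟩ := hf s
    exact ⟨a * r, hright r a ha, map_mul f a r⟩

theorem IsTwoSidedIdealSet.one_mem {A : Type*} [Ring A] [IsSimpleRing A] {I : Set A}
    (hI : IsTwoSidedIdealSet I) {a : A} (ha : a ∈ I) (ha0 : a ≠ 0) : (1 : A) ∈ I := by
  obtain ⟨hzero, hadd, hneg, hleft, hright⟩ := hI
  let T : TwoSidedIdeal A := .mk' I hzero (hadd _ · _) (hneg _ ·) (hleft _ _ ·) (hright _ _ ·)
  simpa [T] using IsSimpleRing.one_mem_of_ne_zero_mem T ha0 (by simpa [T] using ha)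

end TwoSidedIdealSet

namespace Matrix

variable {ι K : Type*} [Fintype ι] [DecidableEq ι] [DivisionRing K]

theorem exists_isIdempotentElem_mul_ne_zero {A : Matrix ι ι K} (hA : A ≠ 0) :
    ∃ E : Matrix ι ι K, IsIdempotentElem (E * A) ∧ E * A ≠ 0 := by
  obtain ⟨p, q, hpq⟩ : ∃ p q, A p q ≠ 0 := by
    by_contra! h
    exact hA (Matrix.ext h)
  refine ⟨single q p (A p q)⁻¹, ?_, fun h => ?_⟩
  · rw [IsIdempotentElem, ← mul_assoc, single_mul_mul_single, inv_mul_cancel₀ hpq, one_mul]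
  · simpa [inv_mul_cancel₀ hpq] using congrFun (congrFun h q) q

theorem exists_mulVec_eq {v : ι → K} (hv : v ≠ 0) (u : ι → K) :
    ∃ B : Matrix ι ι K, B *ᵥ v = u := by
  obtain ⟨p, hp⟩ : ∃ p, v p ≠ 0 := by
    by_contra! h
    exact hv (funext h)
  refine ⟨vecMulVec u (Pi.single p (v p)⁻¹), ?_⟩
  rw [vecMulVec_mulVec, single_dotProduct, inv_mul_cancel₀ hp, MulOpposite.op_one, one_smul]

end Matrix

section LastRowZero

open Matrix

variable {F : Type*} [Field F] {n : ℕ}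

def lastCol (x : lastRowZero n F) : Fin n → F :=
  fun i => (x : Matrix (Fin (n + 1)) (Fin (n + 1)) F) i.castSucc (Fin.last n)

def ofTopLeft (B : Matrix (Fin n) (Fin n) F) : lastRowZero n F :=
  ⟨of fun i j => Fin.lastCases 0 (fun i' => Fin.lastCases 0 (B i') j) i,
    fun j => by simp⟩

@[simp]
theorem lastRowZero_apply_last (x : lastRowZero n F) (j : Fin (n + 1)) :
    (x : Matrix (Fin (n + 1)) (Fin (n + 1)) F) (Fin.last n) j = 0 :=
  x.2 j

@[simp]
theorem topLeft_zero : topLeft (0 : lastRowZero n F) = 0 := by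
  ext; simp [topLeft]

@[simp]
theorem lastCol_zero : lastCol (0 : lastRowZero n F) = 0 := by
  ext; simp [lastCol]

@[simp]
theorem topLeft_ofTopLeft (B : Matrix (Fin n) (Fin n) F) : topLeft (ofTopLeft B) = B := by
  ext i j
  simp [topLeft, ofTopLeft]

theorem ext_topLeft_lastCol {x y : lastRowZero n F} (h₁ : topLeft x = topLeft y)
    (h₂ : lastCol x = lastCol y) : x = y := by
  ext i j
  induction i using Fin.lastCases with
  | last => simp
  | cast i =>
    induction j using Fin.lastCases with
    | last => exact congrFun h₂ i
    | cast j => exact congrFun (congrFun h₁ i) j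

@[simp]
theorem topLeft_mul (x y : lastRowZero n F) : topLeft (x * y) = topLeft x * topLeft y := by
  ext i j
  simp [topLeft, mul_apply, Fin.sum_univ_castSucc]

@[simp]
theorem lastCol_mul (x y : lastRowZero n F) : lastCol (x * y) = topLeft x *ᵥ lastCol y := by
  ext i
  simp [lastCol, topLeft, mul_apply, mulVec, dotProduct, Fin.sum_univ_castSucc]

@[simps]
def topLeftHom : lastRowZero n F →ₙ+* Matrix (Fin n) (Fin n) F where
  toFun := topLeft
  map_zero' := topLeft_zero
  map_add' _ _ := by ext; simp [topLeft]
  map_mul' := topLeft_mul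

theorem topLeftHom_surjective : Function.Surjective (topLeftHom : lastRowZero n F →ₙ+* _) :=
  fun B => ⟨ofTopLeft B, topLeft_ofTopLeft B⟩

theorem mul_eq_zero_of_topLeft_eq_zero {x : lastRowZero n F} (hx : topLeft x = 0)
    (y : lastRowZero n F) : x * y = 0 :=
  ext_topLeft_lastCol (by simp [hx]) (by simp [hx])

theorem jacobsonSet_lastRowZero : jacobsonSet (lastRowZero n F) = {x | topLeft x = 0} := by
  ext a
  constructor
  · intro ha
    by_contra hA
    obtain ⟨E, hE, hE0⟩ := exists_isIdempotentElem_mul_ne_zero hA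
    refine hE0 (hE.eq_zero_of_isLeftQuasiRegular ?_)
    simpa using (ha (ofTopLeft E)).map topLeftHom
  · intro ha r
    exact isLeftQuasiRegular_of_mul_self_eq_zero
      (mul_eq_zero_of_topLeft_eq_zero (by simp [ha.out]) _)

namespace IsTwoSidedIdealSet

variable {I : Set (lastRowZero n F)}

theorem eq_univ_of_topLeft_ne_zero (hI : IsTwoSidedIdealSet I) {x : lastRowZero n F}
    (hx : x ∈ I) (hx0 : topLeft x ≠ 0) : I = Set.univ := by
  -- needed for the simplicity of `Mₙ(F)`
  have : Nonempty (Fin n) := by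
    by_contra! h
    exact hx0 (Subsingleton.elim _ _)
  obtain ⟨e, he, he1⟩ : (1 : Matrix (Fin n) (Fin n) F) ∈ topLeftHom '' I :=
    (hI.image topLeftHom_surjective).one_mem ⟨x, hx, rfl⟩ hx0
  replace he1 : topLeft e = 1 := he1
  refine Set.eq_univ_of_forall fun z => ?_
  have hez : e * z = z := ext_topLeft_lastCol (by simp [he1]) (by simp [he1])
  exact hez ▸ hI.2.2.2.2 z e he

theorem setOf_topLeft_eq_zero_subset (hI : IsTwoSidedIdealSet I) {x : lastRowZero n F}
    (hx : x ∈ I) (hx0 : x ≠ 0) (hxJ : topLeft x = 0) : {y | topLeft y = 0} ⊆ I := by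
  intro y hy
  have hv : lastCol x ≠ 0 := fun hv => hx0 (ext_topLeft_lastCol (by simp [hxJ]) (by simp [hv]))
  obtain ⟨B, hB⟩ := exists_mulVec_eq hv (lastCol y)
  have hBx : ofTopLeft B * x = y := ext_topLeft_lastCol (by simp [hxJ, hy.out]) (by simp [hB])
  exact hBx ▸ hI.2.2.2.1 _ x hx

theorem eq_setOf_topLeft_eq_zero (hI : IsTwoSidedIdealSet I) (hu : I ≠ Set.univ)
    (h0 : I ≠ {0}) : I = {x | topLeft x = 0} := by
  have hsub : I ⊆ {x | topLeft x = 0} := fun x hx =>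
    by_contra fun h => hu (hI.eq_univ_of_topLeft_ne_zero hx h)
  obtain ⟨x, hx, hx0⟩ : ∃ x ∈ I, x ≠ 0 := by
    by_contra! h
    exact h0 (Set.eq_singleton_iff_unique_mem.2 ⟨hI.1, h⟩)
  exact hsub.antisymm (hI.setOf_topLeft_eq_zero_subset hx hx0 (hsub hx))

end IsTwoSidedIdealSet

end LastRowZero

theorem jacobson_lastRowZero_general {F : Type*} [Field F] {n : ℕ} :
    jacobsonSet ↥(lastRowZero n F) = {x | topLeft x = 0} ∧
    (∀ I : Set ↥(lastRowZero n F), IsTwoSidedIdealSet I →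
      I ≠ Set.univ → I ≠ {0} → I = {x | topLeft x = 0}) ∧
    ∃ f : ↥(lastRowZero n F) →ₙ+* Matrix (Fin n) (Fin n) F,
      Function.Surjective f ∧ ∀ x, f x = 0 ↔ topLeft x = 0 :=
  ⟨jacobsonSet_lastRowZero, fun _ hI => hI.eq_setOf_topLeft_eq_zero,
    topLeftHom, topLeftHom_surjective, fun _ => Iff.rfl⟩

/-- For the ring `R` of `(n+1)×(n+1)` matrices over `F_q` with last row zero:
`J = {(0 | v) : v ∈ F_q^n}` is the Jacobson radical of `R`, it is the only
proper nonzero two-sided ideal of `R`, and `R/J ≅ M_n(F_q)`. -/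
theorem jacobson_lastRowZero {F : Type*} [Field F] [Fintype F] {n : ℕ} (hn : 1 ≤ n) :
    jacobsonSet ↥(lastRowZero n F) = {x | topLeft x = 0} ∧
    (∀ I : Set ↥(lastRowZero n F), IsTwoSidedIdealSet I →
      I ≠ Set.univ → I ≠ {0} → I = {x | topLeft x = 0}) ∧
    ∃ f : ↥(lastRowZero n F) →ₙ+* Matrix (Fin n) (Fin n) F,
      Function.Surjective f ∧ ∀ x, f x = 0 ↔ topLeft x = 0 :=
  jacobson_lastRowZero_general
end
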